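/- arXiv:1303.6472 — 3 statements merged into one kernel-verified Lean document; each statement's English description precedes it below -/
import Mathlib

section
/- A compatible function f: ℤ_p → ℤ_p preserves the Haar measure μ_p if and only if (1) φ_0 is a bijection of the set {0,…,p−1} of residues modulo p, and (2) for every k = 1,2,… and every fixed vector x̄_{k−1} = (x_0,…,x_{k−1}) ∈ {0,…,p−1}^k, the map x_k ↦ φ_k(x̄_{k−1}, x_k) is a bijection of {0,…,p−1}. -/
open MeasureTheory Function

variable {p : ℕ} [hp : Fact p.Prime]

noncomputable instance : MeasurableSpace ℤ_[p] := borel _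
instance : BorelSpace ℤ_[p] := ⟨rfl⟩

/-- The Haar measure on `ℤ_[p]`, normalized so that `μp p ℤ_[p] = 1`. -/
noncomputable def μp (p : ℕ) [Fact p.Prime] : Measure ℤ_[p] :=
  Measure.addHaarMeasure ⊤

/-- A function `f : ℤ_[p] → ℤ_[p]` is compatible if it is 1-Lipschitz w.r.t. `|·|_p`. -/
def Compatible (f : ℤ_[p] → ℤ_[p]) : Prop :=
  ∀ x y : ℤ_[p], ‖f x - f y‖ ≤ ‖x - y‖

/-- The `k`-th base-`p` digit of `x ∈ ℤ_[p]`, as a natural number in `{0,…,p-1}`. -/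
noncomputable def digitN (x : ℤ_[p]) (k : ℕ) : ℕ := x.appr (k + 1) / p ^ k

/-- The `k`-th base-`p` digit of `x ∈ ℤ_[p]`, as an element of `ZMod p`. -/
noncomputable def digit (x : ℤ_[p]) (k : ℕ) : ZMod p := (digitN x k : ZMod p)

/-- `f` has coordinate representation given by the family `φ`: the `k`-th digit of `f x`
is `φ k xb x_k`, where `xb = x mod p^k ∈ {0,…,p^k−1}` encodes the digits `(x_0,…,x_{k-1})`
and `x_k` is the `k`-th digit of `x`. -/
def CoordRep (f : ℤ_[p] → ℤ_[p]) (φ : ℕ → ℕ → ZMod p → ZMod p) : Prop :=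
  ∀ (x : ℤ_[p]) (k : ℕ), digit (f x) k = φ k (x.appr k) (digit x k)

/-- The reduction of `f` modulo `p^k`, acting on natural-number residues `{0,…,p^k−1}`
(for `k = k'+1` this is the map `f_{k'}` on `ℤ/p^k ℤ`). -/
noncomputable def red (f : ℤ_[p] → ℤ_[p]) (k : ℕ) (m : ℕ) : ℕ := (f (m : ℤ_[p])).appr k

/-- A map of `ZMod n` is transitive (a single-cycle permutation) iff every point can be
reached from every point by iteration. -/
def IsTransitive {n : ℕ} (g : ZMod n → ZMod n) : Prop :=
  ∀ a b : ZMod n, ∃ s : ℕ, g^[s] a = b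

/-- A self-map of the residues `{0,…,N−1}` is transitive (single cycle). -/
def TransitiveOn (g : ℕ → ℕ) (N : ℕ) : Prop :=
  ∀ a, a < N → ∀ b, b < N → ∃ s : ℕ, g^[s] a = b

/-- `compSeq ψ g xb n = ψ (g^[n-1] xb) ∘ ⋯ ∘ ψ (g xb) ∘ ψ xb`. -/
def compSeq (ψ : ℕ → ZMod p → ZMod p) (g : ℕ → ℕ) (xb : ℕ) : ℕ → ZMod p → ZMod p
  | 0 => id
  | n + 1 => ψ (g^[n] xb) ∘ compSeq ψ g xb n

/-- The permutation `F_{k,xb} = φ_{k,f_{k-1}^{(p^k-1)}(xb)} ∘ ⋯ ∘ φ_{k,xb}` of `ZMod p`. -/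
noncomputable def Fperm (φ : ℕ → ℕ → ZMod p → ZMod p) (f : ℤ_[p] → ℤ_[p]) (k xb : ℕ) :
    ZMod p → ZMod p :=
  compSeq (φ k) (red f k) xb (p ^ k)

/-!
A compatible `f` induces maps `f_k = residueMap f k` on `ℤ/p^kℤ`, and `f⁻¹` of a residue ball of
radius `p^{-k}` is the union of the `#f_k⁻¹(a)` residue balls over it, each of Haar measure
`p^{-k}`. As these balls form a π-system generating the Borel σ-algebra, `f` preserves `μ_p` iff
every `f_k` is bijective. Splitting `x mod p^{k+1}` as `(x mod p^k, x_k)`, the map `f_{k+1}` reads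
`(x̄, x_k) ↦ (f_k x̄, φ_k(x̄, x_k))`, so once `f_k` is bijective, `f_{k+1}` is bijective iff every
`φ_k(x̄, ·)` is.
-/

open PadicInt Finset TopologicalSpace
open scoped ENNReal

lemma PadicInt.toZModPow_eq_iff_norm_sub_le (k : ℕ) (x y : ℤ_[p]) :
    toZModPow k x = toZModPow k y ↔ ‖x - y‖ ≤ (p : ℝ) ^ (-(k : ℤ)) := by
  rw [← sub_eq_zero, ← map_sub, ← RingHom.mem_ker, ker_toZModPow,
    ← norm_le_pow_iff_mem_span_pow]

lemma PadicInt.toZModPow_natCast_val (k : ℕ) (a : ZMod (p ^ k)) :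
    toZModPow k (a.val : ℤ_[p]) = a := by
  rw [map_natCast, ZMod.natCast_val, ZMod.cast_id]

lemma PadicInt.toZModPow_surjective (k : ℕ) : Surjective (toZModPow (p := p) k) :=
  fun a => ⟨_, toZModPow_natCast_val k a⟩

lemma PadicInt.toZModPow_eq_iff_appr_eq (k : ℕ) (x y : ℤ_[p]) :
    toZModPow k x = toZModPow k y ↔ x.appr k = y.appr k := by
  change (x.appr k : ZMod (p ^ k)) = y.appr k ↔ _
  rw [ZMod.natCast_eq_natCast_iff', Nat.mod_eq_of_lt (x.appr_lt k),
    Nat.mod_eq_of_lt (y.appr_lt k)]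

lemma PadicInt.appr_natCast_of_lt {k n : ℕ} (h : n < p ^ k) : (n : ℤ_[p]).appr k = n := by
  have : ((n : ℤ_[p]).appr k : ZMod (p ^ k)) = n := map_natCast (toZModPow k) n
  rwa [ZMod.natCast_eq_natCast_iff', Nat.mod_eq_of_lt (appr_lt _ k), Nat.mod_eq_of_lt h] at this

lemma digitN_lt (x : ℤ_[p]) (k : ℕ) : digitN x k < p := by
  have h := x.appr_lt (k + 1)
  rw [pow_succ] at h
  exact (Nat.div_lt_iff_lt_mul (pow_pos hp.out.pos k)).2 (by linarith)

lemma digit_eq_digit_iff {x y : ℤ_[p]} {k : ℕ} :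
    digit x k = digit y k ↔ digitN x k = digitN y k := by
  rw [digit, digit, ZMod.natCast_eq_natCast_iff', Nat.mod_eq_of_lt (digitN_lt x k),
    Nat.mod_eq_of_lt (digitN_lt y k)]

lemma PadicInt.appr_succ_mod (x : ℤ_[p]) (k : ℕ) : x.appr (k + 1) % p ^ k = x.appr k := by
  obtain ⟨c, hc⟩ := x.dvd_appr_sub_appr k (k + 1) (k.le_add_right 1)
  have := x.appr_mono (k.le_add_right 1)
  rw [show x.appr (k + 1) = x.appr k + p ^ k * c by omega, Nat.add_mul_mod_self_left,
    Nat.mod_eq_of_lt (x.appr_lt k)]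

lemma PadicInt.appr_succ (x : ℤ_[p]) (k : ℕ) :
    x.appr (k + 1) = x.appr k + p ^ k * digitN x k := by
  rw [digitN, ← x.appr_succ_mod k, Nat.mod_add_div]

lemma PadicInt.appr_succ_eq_iff {x y : ℤ_[p]} {k : ℕ} :
    x.appr (k + 1) = y.appr (k + 1) ↔ x.appr k = y.appr k ∧ digit x k = digit y k := by
  rw [digit_eq_digit_iff]
  refine ⟨fun h => ⟨?_, ?_⟩, fun ⟨h, h'⟩ => ?_⟩
  · rw [← x.appr_succ_mod, h, y.appr_succ_mod]
  · rw [digitN, digitN, h]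
  · rw [x.appr_succ, y.appr_succ, h, h']

lemma exists_appr_eq_digit_eq {k xb : ℕ} (hxb : xb < p ^ k) (c : ZMod p) :
    ∃ x : ℤ_[p], x.appr k = xb ∧ digit x k = c := by
  have hlt : xb + p ^ k * c.val < p ^ (k + 1) :=
    calc xb + p ^ k * c.val < p ^ k * (c.val + 1) := by linarith
      _ ≤ p ^ (k + 1) := by rw [pow_succ]; exact Nat.mul_le_mul_left _ c.val_lt
  have happr := appr_natCast_of_lt (p := p) hlt
  refine ⟨(xb + p ^ k * c.val : ℕ), ?_, ?_⟩
  · rw [← appr_succ_mod, happr, Nat.add_mul_mod_self_left, Nat.mod_eq_of_lt hxb]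
  · rw [digit, digitN, happr, Nat.add_mul_div_left _ _ (pow_pos hp.out.pos k),
      Nat.div_eq_of_lt hxb, zero_add, ZMod.natCast_val, ZMod.cast_id]

def residueBall (k : ℕ) (a : ZMod (p ^ k)) : Set ℤ_[p] := toZModPow k ⁻¹' {a}

lemma residueBall_eq_closedBall (k : ℕ) (a : ZMod (p ^ k)) :
    residueBall k a = Metric.closedBall (a.val : ℤ_[p]) ((p : ℝ) ^ (-(k : ℤ))) := by
  ext x
  rw [Metric.mem_closedBall, dist_eq_norm, ← toZModPow_eq_iff_norm_sub_le,
    toZModPow_natCast_val]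
  rfl

lemma measurableSet_residueBall (k : ℕ) (a : ZMod (p ^ k)) :
    MeasurableSet (residueBall k a) := by
  rw [residueBall_eq_closedBall]
  exact measurableSet_closedBall

lemma residueBall_zero_zero : residueBall (p := p) 0 0 = Set.univ :=
  Set.eq_univ_of_forall fun _ => Subsingleton.elim (α := ZMod 1) _ _

lemma residueBall_subset_of_le {k j : ℕ} (hkj : k ≤ j) {x : ℤ_[p]} :
    residueBall j (toZModPow j x) ⊆ residueBall k (toZModPow k x) := by
  intro y (hy : toZModPow j y = toZModPow j x)
  change toZModPow k y = toZModPow k x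
  rw [← cast_toZModPow k j hkj, hy, cast_toZModPow k j hkj]

lemma isTopologicalBasis_residueBall :
    IsTopologicalBasis (Set.range fun i : Σ k, ZMod (p ^ k) => residueBall i.1 i.2) := by
  refine isTopologicalBasis_of_isOpen_of_nhds ?_ fun x U hxU hU => ?_
  · rintro _ ⟨⟨k, a⟩, rfl⟩
    change IsOpen (residueBall k a)
    rw [residueBall_eq_closedBall]
    have : (p : ℝ) ≠ 0 := by exact_mod_cast hp.out.ne_zero
    exact IsUltrametricDist.isOpen_closedBall _ (zpow_ne_zero _ this)
  · have hp1 : (1 : ℝ) < p := by exact_mod_cast hp.out.one_lt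
    obtain ⟨k, -, hk⟩ := (Metric.nhds_basis_closedBall_pow (inv_pos.2 (by positivity))
      (inv_lt_one_of_one_lt₀ hp1)).mem_iff.1 (hU.mem_nhds hxU)
    refine ⟨_, ⟨⟨k, toZModPow k x⟩, rfl⟩, rfl, fun y hy => hk ?_⟩
    rwa [Metric.mem_closedBall, dist_eq_norm, inv_pow, ← zpow_natCast, ← zpow_neg,
      ← toZModPow_eq_iff_norm_sub_le]

lemma isPiSystem_residueBall :
    IsPiSystem (Set.range fun i : Σ k, ZMod (p ^ k) => residueBall (p := p) i.1 i.2) := by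
  rintro _ ⟨⟨k, a⟩, rfl⟩ _ ⟨⟨j, b⟩, rfl⟩
    ⟨x, rfl : toZModPow k x = a, rfl : toZModPow j x = b⟩
  rcases le_total k j with hkj | hjk
  · rw [Set.inter_eq_right.2 (residueBall_subset_of_le hkj)]
    exact ⟨⟨j, _⟩, rfl⟩
  · rw [Set.inter_eq_left.2 (residueBall_subset_of_le hjk)]
    exact ⟨⟨k, _⟩, rfl⟩

lemma MeasureTheory.Measure.ext_of_residueBall {ν ν' : Measure ℤ_[p]} [IsFiniteMeasure ν]
    (h : ∀ k a, ν (residueBall k a) = ν' (residueBall k a)) : ν = ν' := by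
  refine ext_of_generate_finite _ isTopologicalBasis_residueBall.borel_eq_generateFrom
    isPiSystem_residueBall ?_ ?_
  · rintro _ ⟨⟨k, a⟩, rfl⟩
    exact h k a
  · rw [← residueBall_zero_zero]
    exact h 0 0

instance : (μp p).IsAddHaarMeasure := by
  unfold μp
  infer_instance

lemma μp_univ : μp p Set.univ = 1 := by
  simpa [μp] using Measure.addHaarMeasure_self (K₀ := (⊤ : PositiveCompacts ℤ_[p]))

lemma μp_residueBall (k : ℕ) (a : ZMod (p ^ k)) :
    μp p (residueBall k a) = ((p : ℝ≥0∞) ^ k)⁻¹ := by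
  set H := (toZModPow (p := p) k).toAddMonoidHom.ker
  have hH : (H : Set ℤ_[p]) = residueBall k 0 := rfl
  have hindex : H.index = p ^ k := by
    rw [AddSubgroup.index_ker, AddMonoidHom.range_eq_top.2 (toZModPow_surjective k)]
    simp
  have : H.FiniteIndex := ⟨by rw [hindex]; exact pow_ne_zero _ hp.out.ne_zero⟩
  have htranslate : (fun y => (a.val : ℤ_[p]) + y) ⁻¹' residueBall k a = residueBall k 0 := by
    ext y
    simp [residueBall]
  have hmul := H.index_mul_measure (by rw [hH]; exact measurableSet_residueBall k 0) (μp p)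
  rw [hindex, hH, μp_univ, ← htranslate, measure_preimage_add] at hmul
  rw [← Nat.cast_pow]
  exact ENNReal.eq_inv_of_mul_eq_one_left ((mul_comm _ _).trans hmul)

lemma pairwise_disjoint_residueBall (k : ℕ) : Pairwise (Disjoint on residueBall (p := p) k) :=
  fun _ _ hab => Disjoint.preimage _ (Set.disjoint_singleton.2 hab)

lemma μp_preimage_toZModPow (k : ℕ) (S : Finset (ZMod (p ^ k))) :
    μp p (toZModPow k ⁻¹' S) = #S * ((p : ℝ≥0∞) ^ k)⁻¹ := by
  have : toZModPow k ⁻¹' (S : Set (ZMod (p ^ k))) = ⋃ a ∈ S, residueBall k a := by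
    ext x
    simp [residueBall]
  rw [this, measure_biUnion_finset ((pairwise_disjoint_residueBall k).set_pairwise _)
    (fun a _ => measurableSet_residueBall k a)]
  simp [μp_residueBall]

lemma Fintype.bijective_iff_card_fiber_eq_one {α β : Type*} [Fintype α] [DecidableEq β]
    (g : α → β) : Bijective g ↔ ∀ b, #{a | g a = b} = 1 := by
  simp only [bijective_iff_existsUnique, Finset.card_eq_one, Finset.eq_singleton_iff_unique_mem,
    Finset.mem_filter, Finset.mem_univ, true_and, ExistsUnique]

noncomputable def residueMap (f : ℤ_[p] → ℤ_[p]) (k : ℕ) (a : ZMod (p ^ k)) :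
    ZMod (p ^ k) :=
  toZModPow k (f (a.val : ℤ_[p]))

namespace Compatible

variable {f : ℤ_[p] → ℤ_[p]}

lemma lipschitzWith (hf : Compatible f) : LipschitzWith 1 f :=
  .of_dist_le_mul fun x y => by simpa [dist_eq_norm] using hf x y

lemma toZModPow_eq {k : ℕ} {x y : ℤ_[p]} (hf : Compatible f)
    (h : toZModPow k x = toZModPow k y) : toZModPow k (f x) = toZModPow k (f y) := by
  rw [toZModPow_eq_iff_norm_sub_le] at h ⊢
  exact (hf x y).trans h

lemma toZModPow_apply (hf : Compatible f) (k : ℕ) (x : ℤ_[p]) :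
    toZModPow k (f x) = residueMap f k (toZModPow k x) :=
  hf.toZModPow_eq (toZModPow_natCast_val k _).symm

lemma μp_preimage_residueBall (hf : Compatible f) (k : ℕ) (a : ZMod (p ^ k)) :
    μp p (f ⁻¹' residueBall k a) =
      #{b | residueMap f k b = a} * ((p : ℝ≥0∞) ^ k)⁻¹ := by
  rw [← μp_preimage_toZModPow]
  congr 1
  ext x
  simp [residueBall, hf.toZModPow_apply]

lemma measurePreserving_iff_bijective_residueMap (hf : Compatible f) :
    MeasurePreserving f (μp p) (μp p) ↔ ∀ k, Bijective (residueMap f k) := by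
  have hmeas := hf.lipschitzWith.continuous.measurable
  simp only [Fintype.bijective_iff_card_fiber_eq_one]
  constructor
  · intro h k a
    have := h.measure_preimage (measurableSet_residueBall k a).nullMeasurableSet
    rw [hf.μp_preimage_residueBall, μp_residueBall] at this
    have hne : ((p : ℝ≥0∞) ^ k)⁻¹ ≠ 0 := by simp
    have hfin : ((p : ℝ≥0∞) ^ k)⁻¹ ≠ ⊤ := by simp [hp.out.ne_zero]
    exact_mod_cast (ENNReal.mul_left_inj hne hfin).1 (this.trans (one_mul _).symm)
  · intro h
    refine ⟨hmeas, Measure.ext_of_residueBall fun k a => ?_⟩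
    rw [Measure.map_apply hmeas (measurableSet_residueBall k a),
      hf.μp_preimage_residueBall, h, μp_residueBall, Nat.cast_one, one_mul]

lemma appr_eq {k : ℕ} {x y : ℤ_[p]} (hf : Compatible f) (h : x.appr k = y.appr k) :
    (f x).appr k = (f y).appr k := by
  rw [← toZModPow_eq_iff_appr_eq] at h ⊢
  exact hf.toZModPow_eq h

lemma injective_residueMap_iff (hf : Compatible f) (k : ℕ) :
    Injective (residueMap f k) ↔
      ∀ x y, (f x).appr k = (f y).appr k → x.appr k = y.appr k := by
  simp only [Injective, (toZModPow_surjective k).forall, ← hf.toZModPow_apply,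
    toZModPow_eq_iff_appr_eq]

lemma injective_residueMap_succ_iff {φ : ℕ → ℕ → ZMod p → ZMod p} (hf : Compatible f)
    (hφ : CoordRep f φ) {k : ℕ} (hk : Injective (residueMap f k)) :
    Injective (residueMap f (k + 1)) ↔ ∀ xb < p ^ k, Injective (φ k xb) := by
  rw [hf.injective_residueMap_iff] at hk ⊢
  simp only [appr_succ_eq_iff]
  constructor
  · intro h xb hxb c d hcd
    obtain ⟨x, hx, rfl⟩ := exists_appr_eq_digit_eq hxb c
    obtain ⟨y, hy, rfl⟩ := exists_appr_eq_digit_eq hxb d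
    refine (h x y ⟨hf.appr_eq (hx.trans hy.symm), ?_⟩).2
    rw [hφ, hφ, hx, hy, hcd]
  · rintro h x y ⟨hfk, hfd⟩
    have hxy := hk x y hfk
    refine ⟨hxy, h _ (x.appr_lt k) ?_⟩
    rw [← hφ, hfd, hφ, hxy]

lemma forall_injective_residueMap_iff {φ : ℕ → ℕ → ZMod p → ZMod p} (hf : Compatible f)
    (hφ : CoordRep f φ) :
    (∀ k, Injective (residueMap f k)) ↔ ∀ k, ∀ xb < p ^ k, Injective (φ k xb) := by
  refine ⟨fun h k => (hf.injective_residueMap_succ_iff hφ (h k)).1 (h (k + 1)), fun h k => ?_⟩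
  induction k with
  | zero => exact fun a b _ => Subsingleton.elim (α := ZMod 1) a b
  | succ k ih => exact (hf.injective_residueMap_succ_iff hφ ih).2 (h k)

end Compatible

/-- A compatible `f : ℤ_[p] → ℤ_[p]` preserves the Haar measure `μp p` iff `φ_0` is a
bijection of the residues mod `p` and each `φ_{k,x̄}` (`k ≥ 1`, `x̄ < p^k`) is a bijection
of the residues mod `p`. -/
theorem measurePreserving_iff_coordinate_bijective
    (f : ℤ_[p] → ℤ_[p]) (φ : ℕ → ℕ → ZMod p → ZMod p)
    (hf : Compatible f) (hφ : CoordRep f φ) :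
    MeasurePreserving f (μp p) (μp p) ↔
      (Function.Bijective (φ 0 0) ∧
        ∀ k, 1 ≤ k → ∀ xb, xb < p ^ k → Function.Bijective (φ k xb)) := by
  simp only [hf.measurePreserving_iff_bijective_residueMap, ← Finite.injective_iff_bijective,
    hf.forall_injective_residueMap_iff hφ]
  constructor
  · exact fun h => ⟨h 0 0 (by simp), fun k _ => h k⟩
  · rintro ⟨h0, h⟩ (_ | k) xb hxb
    · obtain rfl : xb = 0 := by simpa using hxb
      exact h0
    · exact h (k + 1) k.succ_pos xb hxb
end

section
/- Let f: ℤ_p → ℤ_p be compatible such that φ_0 and every φ_{k,x̄_{k−1}} are permutations of {0,…,p−1}, and suppose the reduction f_{k−1} of f modulo p^k is a transitive permutation of ℤ/p^kℤ. Then for any two residues x̄_{k−1}, ȳ_{k−1} ∈ ℤ/p^kℤ the permutations F_{k,x̄_{k−1}} and F_{k,ȳ_{k−1}} are conjugate in the symmetric group on {0,…,p−1} (explicitly, G ∘ F_{k,x̄_{k−1}} ∘ G^{−1} = F_{k,ȳ_{k−1}} where G = φ_{k,f_{k−1}^{(r−1)}(x̄_{k−1})} ∘ ⋯ ∘ φ_{k,x̄_{k−1}}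 and r is such that f_{k−1}^{(r)}(x̄_{k−1}) = ȳ_{k−1}); in particular, F_{k,x̄_{k−1}} is transitive if and only if F_{k,ȳ_{k−1}} is transitive. -/
open MeasureTheory Function

variable {p : ℕ} [hp : Fact p.Prime]

/-!
Write `G_r = φ_{k,f^{(r-1)}(x̄)} ∘ ⋯ ∘ φ_{k,x̄}` for the composite of `r` consecutive coordinate
maps along the orbit of `x̄`, so that `G_{m+n}` is `G_n` started at `f^{(m)}(x̄)` after `G_m`.
Transitivity of `f_{k-1}` on the `p^k` residues forces `f_{k-1}^{(p^k)}(x̄) = x̄`, and splitting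
`G_{p^k + r} = G_{r + p^k}` both ways gives `G_r ∘ F_{k,x̄} = F_{k,ȳ} ∘ G_r`. As `G_r` is a
composite of permutations, this is a conjugacy, and conjugate maps are transitive together.
-/

theorem Function.minimalPeriod_eq_card_of_reachable {α : Type*} [DecidableEq α] {g : α → α}
    {s : Finset α} (hmaps : Set.MapsTo g s s) (hreach : ∀ a ∈ s, ∀ b ∈ s, ∃ n, g^[n] a = b)
    {a : α} (ha : a ∈ s) : minimalPeriod g a = s.card := by
  have hper : a ∈ periodicPts g := by
    obtain ⟨n, hn⟩ := hreach (g a) (hmaps ha) a ha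
    exact mk_mem_periodicPts n.succ_pos (by rwa [IsPeriodicPt, IsFixedPt, iterate_succ_apply])
  have horbit : (Finset.range (minimalPeriod g a)).image (g^[·] a) = s := by
    ext b
    simp only [Finset.mem_image, Finset.mem_range]
    constructor
    · rintro ⟨n, -, rfl⟩
      exact hmaps.iterate n ha
    · intro hb
      obtain ⟨n, rfl⟩ := hreach a ha b hb
      exact ⟨n % minimalPeriod g a, Nat.mod_lt _ (minimalPeriod_pos_of_mem_periodicPts hper),
        iterate_mod_minimalPeriod_eq⟩
  rw [← horbit, Finset.card_image_of_injOn, Finset.card_range]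
  simpa only [Finset.coe_range] using iterate_injOn_Iio_minimalPeriod

theorem iterate_eq_self_of_transitiveOn {g : ℕ → ℕ} {N : ℕ} (hmaps : ∀ a < N, g a < N)
    (htr : TransitiveOn g N) {a : ℕ} (ha : a < N) : g^[N] a = a := by
  have hperiod : minimalPeriod g a = N := by
    simpa using minimalPeriod_eq_card_of_reachable (s := Finset.range N)
      (by simpa [Set.MapsTo] using hmaps) (by simpa [TransitiveOn] using htr) (by simpa using ha)
  rw [← hperiod]
  exact iterate_minimalPeriod

theorem IsTransitive.of_semiconj {n : ℕ} {F F' h : ZMod n → ZMod n} (hsurj : Surjective h)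
    (hconj : Semiconj h F F') (hF : IsTransitive F) : IsTransitive F' := by
  intro a b
  obtain ⟨a, rfl⟩ := hsurj a
  obtain ⟨b, rfl⟩ := hsurj b
  obtain ⟨s, rfl⟩ := hF a b
  exact ⟨s, ((hconj.iterate_right s).eq a).symm⟩

theorem isTransitive_iff_of_semiconj {n : ℕ} {F F' h : ZMod n → ZMod n} (hbij : Bijective h)
    (hconj : Semiconj h F F') : IsTransitive F ↔ IsTransitive F' :=
  ⟨IsTransitive.of_semiconj hbij.surjective hconj,
    IsTransitive.of_semiconj (leftInverse_invFun hbij.injective).surjective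
      (hconj.inverse_left (leftInverse_invFun hbij.injective)
        (rightInverse_invFun hbij.surjective))⟩

theorem Function.Semiconj.comp_comp_invFun_eq {α : Type*} [Nonempty α] {F F' h : α → α}
    (hsurj : Surjective h) (hconj : Semiconj h F F') : h ∘ F ∘ invFun h = F' := by
  funext z
  simp only [comp_apply, hconj.eq, rightInverse_invFun hsurj z]

section compSeq

variable {q : ℕ} (ψ : ℕ → ZMod q → ZMod q) (g : ℕ → ℕ)

theorem compSeq_add (xb m n : ℕ) :
    compSeq ψ g xb (m + n) = compSeq ψ g (g^[m] xb) n ∘ compSeq ψ g xb m := by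
  induction n with
  | zero => rfl
  | succ n ih =>
    rw [← Nat.add_assoc, compSeq, ih, compSeq, Nat.add_comm m n, iterate_add_apply]
    rfl

theorem compSeq_bijective {xb : ℕ} (hψ : ∀ n, Bijective (ψ (g^[n] xb))) (r : ℕ) :
    Bijective (compSeq ψ g xb r) := by
  induction r with
  | zero => exact bijective_id
  | succ r ih => exact (hψ r).comp ih

theorem semiconj_compSeq_of_iterate_eq_self {xb N : ℕ} (hper : g^[N] xb = xb) (r : ℕ) :
    Semiconj (compSeq ψ g xb r) (compSeq ψ g xb N) (compSeq ψ g (g^[r] xb) N) := by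
  have hsplit : compSeq ψ g xb (N + r) = compSeq ψ g xb r ∘ compSeq ψ g xb N := by
    rw [compSeq_add, hper]
  refine fun z => congrFun (?_ : _ ∘ _ = _ ∘ _) z
  rw [← hsplit, ← compSeq_add, Nat.add_comm]

end compSeq

theorem Fperm_conjugate_general
    (f : ℤ_[p] → ℤ_[p]) (φ : ℕ → ℕ → ZMod p → ZMod p)
    (hperm : ∀ k xb, xb < p ^ k → Function.Bijective (φ k xb))
    (k : ℕ) (htr : TransitiveOn (red f k) (p ^ k))
    (xb yb : ℕ) (hxb : xb < p ^ k)
    (r : ℕ) (hr : (red f k)^[r] xb = yb) :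
    (compSeq (φ k) (red f k) xb r) ∘ (Fperm φ f k xb) ∘
        Function.invFun (compSeq (φ k) (red f k) xb r) = Fperm φ f k yb ∧
      (IsTransitive (Fperm φ f k xb) ↔ IsTransitive (Fperm φ f k yb)) := by
  have hmaps : ∀ a < p ^ k, red f k a < p ^ k := fun _ _ => PadicInt.appr_lt _ _
  have hbij : Bijective (compSeq (φ k) (red f k) xb r) :=
    compSeq_bijective (φ k) (red f k)
      (fun n => hperm k _ (Set.MapsTo.iterate (s := Set.Iio (p ^ k)) hmaps n hxb)) r
  have hconj : Semiconj (compSeq (φ k) (red f k) xb r) (Fperm φ f k xb) (Fperm φ f k yb) := by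
    rw [Fperm, Fperm, ← hr]
    exact semiconj_compSeq_of_iterate_eq_self (φ k) (red f k)
      (iterate_eq_self_of_transitiveOn hmaps htr hxb) r
  exact ⟨hconj.comp_comp_invFun_eq hbij.surjective, isTransitive_iff_of_semiconj hbij hconj⟩

/-- If the reduction of `f` mod `p^k` is a transitive permutation of the residues mod
`p^k`, then for any residues `x̄, ȳ < p^k` the permutations `F_{k,x̄}` and `F_{k,ȳ}` are
conjugate: explicitly `G ∘ F_{k,x̄} ∘ G⁻¹ = F_{k,ȳ}` with
`G = φ_{k,f_{k−1}^{(r−1)}(x̄)} ∘ ⋯ ∘ φ_{k,x̄}` where `f_{k−1}^{(r)}(x̄) = ȳ`; in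
particular `F_{k,x̄}` is transitive iff `F_{k,ȳ}` is. -/
theorem Fperm_conjugate
    (f : ℤ_[p] → ℤ_[p]) (φ : ℕ → ℕ → ZMod p → ZMod p)
    (hf : Compatible f) (hφ : CoordRep f φ)
    (hperm : ∀ k xb, xb < p ^ k → Function.Bijective (φ k xb))
    (k : ℕ) (hk : 1 ≤ k) (htr : TransitiveOn (red f k) (p ^ k))
    (xb yb : ℕ) (hxb : xb < p ^ k) (hyb : yb < p ^ k)
    (r : ℕ) (hr : (red f k)^[r] xb = yb) :
    (compSeq (φ k) (red f k) xb r) ∘ (Fperm φ f k xb) ∘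
        Function.invFun (compSeq (φ k) (red f k) xb r) = Fperm φ f k yb ∧
      (IsTransitive (Fperm φ f k xb) ↔ IsTransitive (Fperm φ f k yb)) :=
  Fperm_conjugate_general f φ hperm k htr xb yb hxb r hr
end

section
/- Let p be an odd prime, c, r ∈ ℤ_p, and h: ℤ_p → ℤ_p a compatible function, and define f: ℤ_p → ℤ_p by f(x) = c + r·x + p·(h(x+1) − h(x)). If c ≢ 0 (mod p) and r ≡ 1 (mod p), then f is ergodic with respect to μ_p. -/
open MeasureTheory Function

variable {p : ℕ} [hp : Fact p.Prime]

/-!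
Write `r = 1 + p s`, so that the map is `f x = c + x + p G x` with `G x = s x + (h (x + 1) - h x)`
compatible and `p^k ∣ ∑_{a < p^k} G a` (the sum of the `a` is `p^k (p^k - 1) / 2` as `p` is odd,
and the `h`-terms telescope). If `f` is transitive modulo `p^k`, the first `p^k` points of every
orbit form a complete residue system, so `f^[p^k] z ≡ z + p^k c (mod p^(k+1))`; as `c` is a unit
mod `p`, this lifts transitivity to `p^(k+1)`.

A compatible map that is transitive modulo every `p^k` permutes the balls of each radius, hence
preserves Haar measure; and for an invariant set `S` the measure of `S ∩ B` is the same for all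
balls `B` of a given radius, so `S` is independent of the π-system of balls and `μ S ∈ {0, 1}`.
-/

open Finset PadicInt
open scoped ENNReal

section Compatible

variable {f g : ℤ_[p] → ℤ_[p]}

lemma pow_dvd_iff_norm_le {k : ℕ} {x : ℤ_[p]} :
    (p : ℤ_[p]) ^ k ∣ x ↔ ‖x‖ ≤ (p : ℝ) ^ (-(k : ℤ)) := by
  rw [norm_le_pow_iff_mem_span_pow, Ideal.mem_span_singleton]

lemma toZModPow_eq_toZModPow_iff {k : ℕ} {x y : ℤ_[p]} :
    toZModPow k x = toZModPow k y ↔ (p : ℤ_[p]) ^ k ∣ x - y := by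
  rw [← sub_eq_zero, ← map_sub, ← RingHom.mem_ker, ker_toZModPow, Ideal.mem_span_singleton]

lemma compatible_const (c : ℤ_[p]) : Compatible fun _ : ℤ_[p] => c := by
  simp [Compatible]

lemma compatible_id : Compatible fun x : ℤ_[p] => x :=
  fun _ _ => le_rfl

lemma Compatible.add (hf : Compatible f) (hg : Compatible g) :
    Compatible fun x => f x + g x := fun x y =>
  calc ‖f x + g x - (f y + g y)‖ = ‖(f x - f y) + (g x - g y)‖ := by ring_nf
    _ ≤ max ‖f x - f y‖ ‖g x - g y‖ := IsUltrametricDist.norm_add_le_max _ _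
    _ ≤ ‖x - y‖ := max_le (hf x y) (hg x y)

lemma Compatible.neg (hf : Compatible f) : Compatible fun x => -f x := fun x y => by
  rw [neg_sub_neg, norm_sub_rev]
  exact hf x y

lemma Compatible.sub (hf : Compatible f) (hg : Compatible g) :
    Compatible fun x => f x - g x := by
  simpa only [sub_eq_add_neg] using hf.add hg.neg

lemma Compatible.const_mul (hf : Compatible f) (a : ℤ_[p]) : Compatible fun x => a * f x :=
  fun x y =>
  calc ‖a * f x - a * f y‖ = ‖a‖ * ‖f x - f y‖ := by rw [← mul_sub, norm_mul]
    _ ≤ 1 * ‖x - y‖ := mul_le_mul (norm_le_one a) (hf x y) (norm_nonneg _) zero_le_one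
    _ = ‖x - y‖ := one_mul _

lemma Compatible.comp_add_const (hf : Compatible f) (a : ℤ_[p]) :
    Compatible fun x => f (x + a) := fun x y => by
  simpa using hf (x + a) (y + a)

lemma Compatible.continuous (hf : Compatible f) : Continuous f :=
  (LipschitzWith.of_dist_le_mul (K := 1) fun x y => by
    simpa [dist_eq_norm] using hf x y).continuous

lemma Compatible.pow_dvd_sub (hf : Compatible f) {k : ℕ} {x y : ℤ_[p]}
    (hxy : (p : ℤ_[p]) ^ k ∣ x - y) : (p : ℤ_[p]) ^ k ∣ f x - f y := by
  rw [pow_dvd_iff_norm_le] at hxy ⊢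
  exact (hf x y).trans hxy

lemma Compatible.pow_dvd_sum_range_sub (hf : Compatible f) (k : ℕ) :
    (p : ℤ_[p]) ^ k ∣ ∑ a ∈ range (p ^ k), (f (a + 1) - f a) := by
  have := sum_range_sub (fun a : ℕ => f a) (p ^ k)
  push_cast at this
  rw [this]
  exact hf.pow_dvd_sub (by simp)

end Compatible

section Reduction

/-- The map induced by `f` on `ℤ/p^kℤ`; for compatible `f` it does not depend on the lift. -/
noncomputable def reduceMod (f : ℤ_[p] → ℤ_[p]) (k : ℕ) (a : ZMod (p ^ k)) : ZMod (p ^ k) :=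
  toZModPow k (f a.val)

variable {f : ℤ_[p] → ℤ_[p]}

lemma Compatible.semiconj_toZModPow (hf : Compatible f) (k : ℕ) :
    Semiconj (toZModPow k) f (reduceMod f k) := fun x => by
  rw [reduceMod, toZModPow_eq_toZModPow_iff]
  apply hf.pow_dvd_sub
  rw [← toZModPow_eq_toZModPow_iff, map_natCast, ZMod.natCast_zmod_val]

lemma Compatible.isTransitive_reduceMod (hf : Compatible f) {k : ℕ}
    (hk : ∀ x y : ℤ_[p], ∃ n, (p : ℤ_[p]) ^ k ∣ f^[n] x - y) :
    IsTransitive (reduceMod f k) := by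
  intro a b
  obtain ⟨n, hn⟩ := hk a.val b.val
  refine ⟨n, ?_⟩
  rw [← toZModPow_eq_toZModPow_iff, ((hf.semiconj_toZModPow k).iterate_right n).eq] at hn
  simpa only [map_natCast, ZMod.natCast_zmod_val] using hn

lemma IsTransitive.bijective {n : ℕ} [NeZero n] {g : ZMod n → ZMod n} (hg : IsTransitive g) :
    Bijective g := by
  have hsurj : Surjective g := fun b => by
    obtain ⟨s, hs⟩ := hg (g b) b
    exact ⟨g^[s] b, by rwa [← iterate_succ_apply' g, iterate_succ_apply]⟩
  exact ⟨Finite.injective_iff_surjective.mpr hsurj, hsurj⟩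

lemma Compatible.preimage_toZModPow_reduceMod (hf : Compatible f) {k : ℕ}
    (hinj : Injective (reduceMod f k)) (a : ZMod (p ^ k)) :
    f ⁻¹' (toZModPow k ⁻¹' {reduceMod f k a}) = toZModPow k ⁻¹' {a} := by
  ext x
  simp only [Set.mem_preimage, Set.mem_singleton_iff, (hf.semiconj_toZModPow k).eq, hinj.eq_iff]

end Reduction

instance inst_s11 : (μp p).IsAddHaarMeasure := by
  unfold μp; infer_instance

instance : IsProbabilityMeasure (μp p) :=
  ⟨by
    rw [μp, ← TopologicalSpace.PositiveCompacts.coe_top]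
    exact Measure.addHaarMeasure_self⟩

lemma preimage_toZModPow_singleton_eq_closedBall (k : ℕ) (a : ZMod (p ^ k)) :
    toZModPow k ⁻¹' {a} = Metric.closedBall (a.val : ℤ_[p]) ((p : ℝ) ^ (-(k : ℤ))) := by
  ext x
  rw [Set.mem_preimage, Set.mem_singleton_iff, Metric.mem_closedBall, dist_eq_norm,
    ← pow_dvd_iff_norm_le, ← toZModPow_eq_toZModPow_iff, map_natCast, ZMod.natCast_zmod_val]

lemma isOpen_preimage_toZModPow_singleton (k : ℕ) (a : ZMod (p ^ k)) :
    IsOpen (toZModPow k ⁻¹' {a}) := by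
  rw [preimage_toZModPow_singleton_eq_closedBall]
  exact IsUltrametricDist.isOpen_closedBall _ (zpow_ne_zero _ (Nat.cast_ne_zero.2 hp.out.ne_zero))

lemma measurableSet_preimage_toZModPow_singleton (k : ℕ) (a : ZMod (p ^ k)) :
    MeasurableSet (toZModPow k ⁻¹' {a}) :=
  (isOpen_preimage_toZModPow_singleton k a).measurableSet

/-- The balls of `ℤ_[p]`, i.e. the fibres of the reductions `ℤ_[p] → ℤ/p^kℤ`. -/
def cylinders (p : ℕ) [Fact p.Prime] : Set (Set ℤ_[p]) :=
  {S | ∃ (k : ℕ) (a : ZMod (p ^ k)), toZModPow k ⁻¹' {a} = S}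

lemma isTopologicalBasis_cylinders : TopologicalSpace.IsTopologicalBasis (cylinders p) := by
  refine TopologicalSpace.isTopologicalBasis_of_isOpen_of_nhds ?_ fun x U hxU hU => ?_
  · rintro _ ⟨k, a, rfl⟩
    exact isOpen_preimage_toZModPow_singleton k a
  · obtain ⟨ε, hε, hball⟩ := Metric.isOpen_iff.1 hU x hxU
    obtain ⟨k, hk⟩ := exists_pow_neg_lt p hε
    refine ⟨_, ⟨k, toZModPow k x, rfl⟩, rfl, fun y hy => hball ?_⟩
    rw [Metric.mem_ball, dist_eq_norm]
    exact (pow_dvd_iff_norm_le.1 (toZModPow_eq_toZModPow_iff.1 hy)).trans_lt hk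

lemma preimage_toZModPow_singleton_subset {k l : ℕ} (hkl : k ≤ l) {x : ℤ_[p]} :
    toZModPow l ⁻¹' {toZModPow l x} ⊆ toZModPow k ⁻¹' {toZModPow k x} := by
  intro y hy
  rw [Set.mem_preimage, Set.mem_singleton_iff, ← cast_toZModPow k l hkl y, hy,
    cast_toZModPow k l hkl x]

lemma isPiSystem_cylinders : IsPiSystem (cylinders p) := by
  rintro _ ⟨k, a, rfl⟩ _ ⟨l, b, rfl⟩ ⟨x, rfl, rfl⟩
  rcases le_total k l with hkl | hlk
  · rw [Set.inter_eq_self_of_subset_right (preimage_toZModPow_singleton_subset hkl)]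
    exact ⟨l, _, rfl⟩
  · rw [Set.inter_eq_self_of_subset_left (preimage_toZModPow_singleton_subset hlk)]
    exact ⟨k, _, rfl⟩

lemma natCast_pow_mul_measure_preimage_toZModPow_inter {μ : Measure ℤ_[p]} {S : Set ℤ_[p]}
    {k : ℕ} (hS : ∀ a b : ZMod (p ^ k),
      μ (toZModPow k ⁻¹' {a} ∩ S) = μ (toZModPow k ⁻¹' {b} ∩ S)) (a : ZMod (p ^ k)) :
    (p : ℝ≥0∞) ^ k * μ (toZModPow k ⁻¹' {a} ∩ S) = μ S := by
  have hsum := sum_measure_preimage_singleton (μ := μ.restrict S) univ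
    (fun b _ => measurableSet_preimage_toZModPow_singleton k b)
  simp only [coe_univ, Set.preimage_univ, Measure.restrict_apply_univ,
    Measure.restrict_apply (measurableSet_preimage_toZModPow_singleton k _)] at hsum
  rw [← hsum, sum_congr rfl fun b _ => hS b a, sum_const, card_univ, ZMod.card, nsmul_eq_mul]
  push_cast
  rfl

lemma μp_preimage_toZModPow_singleton (k : ℕ) (a : ZMod (p ^ k)) :
    μp p (toZModPow k ⁻¹' {a}) = ((p : ℝ≥0∞) ^ k)⁻¹ := by
  have htranslate : ∀ b : ZMod (p ^ k),
      μp p (toZModPow k ⁻¹' {b}) = μp p (toZModPow k ⁻¹' {0}) := fun b => by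
    rw [← measure_preimage_add _ (b.val : ℤ_[p])]
    congr 1
    ext x
    simp
  have := natCast_pow_mul_measure_preimage_toZModPow_inter (μ := μp p) (S := Set.univ)
    (by simpa using fun a b => (htranslate a).trans (htranslate b).symm) a
  rw [Set.inter_univ, measure_univ] at this
  exact ENNReal.eq_inv_of_mul_eq_one_left (by rwa [mul_comm])

section Ergodicity

lemma measure_eq_zero_or_one_of_forall_measure_inter_eq_mul {α : Type*} [m : MeasurableSpace α]
    {μ : Measure α} [IsProbabilityMeasure μ] {C : Set (Set α)}
    (hgen : m = MeasurableSpace.generateFrom C) (hC : IsPiSystem C) {S : Set α}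
    (hS : MeasurableSet S) (hindep : ∀ B ∈ C, μ (B ∩ S) = μ S * μ B) :
    μ S = 0 ∨ μ S = 1 := by
  have hrestrict : μ.restrict S = μ S • μ :=
    ext_of_generate_finite C hgen hC
      (fun B hB => by simpa [Measure.restrict_apply' hS] using hindep B hB)
      (by simp)
  have hsq : μ S * μ S = μ S := by
    simpa [Measure.restrict_apply' hS] using (congrArg (· S) hrestrict).symm
  by_cases h0 : μ S = 0
  · exact .inl h0
  · exact .inr ((ENNReal.mul_eq_left h0 (measure_ne_top μ S)).1 hsq)

lemma preErgodic_of_measure_eq_zero_or_one {α : Type*} [MeasurableSpace α] {μ : Measure α}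
    [IsProbabilityMeasure μ] {f : α → α}
    (h : ∀ S, MeasurableSet S → f ⁻¹' S = S → μ S = 0 ∨ μ S = 1) : PreErgodic f μ :=
  ⟨fun S hS hfS => Filter.eventuallyConst_set'.2 <|
    (h S hS hfS).imp ae_eq_empty.2 fun h1 => ae_eq_univ.2 ((prob_compl_eq_zero_iff hS).2 h1)⟩

variable {f : ℤ_[p] → ℤ_[p]}

lemma Compatible.measurePreserving (hf : Compatible f) (hbij : ∀ k, Bijective (reduceMod f k)) :
    MeasurePreserving f (μp p) (μp p) := by
  refine ⟨hf.continuous.measurable, ext_of_generate_finite _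
    isTopologicalBasis_cylinders.borel_eq_generateFrom isPiSystem_cylinders ?_ ?_⟩
  · rintro _ ⟨k, a, rfl⟩
    obtain ⟨b, rfl⟩ := (hbij k).surjective a
    rw [Measure.map_apply hf.continuous.measurable
        (measurableSet_preimage_toZModPow_singleton _ _),
      hf.preimage_toZModPow_reduceMod (hbij k).injective, μp_preimage_toZModPow_singleton,
      μp_preimage_toZModPow_singleton]
  · rw [Measure.map_apply hf.continuous.measurable MeasurableSet.univ, Set.preimage_univ]

lemma Compatible.preErgodic (hf : Compatible f) (hmp : MeasurePreserving f (μp p) (μp p))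
    (htr : ∀ k, IsTransitive (reduceMod f k)) : PreErgodic f (μp p) := by
  refine preErgodic_of_measure_eq_zero_or_one fun S hS hfS =>
    measure_eq_zero_or_one_of_forall_measure_inter_eq_mul
      isTopologicalBasis_cylinders.borel_eq_generateFrom isPiSystem_cylinders hS ?_
  rintro _ ⟨k, a, rfl⟩
  have hstep : ∀ b, μp p (toZModPow k ⁻¹' {reduceMod f k b} ∩ S) =
      μp p (toZModPow k ⁻¹' {b} ∩ S) := fun b => by
    rw [← hmp.measure_preimage
      ((measurableSet_preimage_toZModPow_singleton k _).inter hS).nullMeasurableSet,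
      Set.preimage_inter, hfS, hf.preimage_toZModPow_reduceMod (htr k).bijective.injective]
  have hiter : ∀ n b, μp p (toZModPow k ⁻¹' {(reduceMod f k)^[n] b} ∩ S) =
      μp p (toZModPow k ⁻¹' {b} ∩ S) := by
    intro n b
    induction n with
    | zero => rfl
    | succ n ih => rw [iterate_succ_apply', hstep, ih]
  have hconst : ∀ a b : ZMod (p ^ k),
      μp p (toZModPow k ⁻¹' {a} ∩ S) = μp p (toZModPow k ⁻¹' {b} ∩ S) := fun a b => by
    obtain ⟨n, rfl⟩ := htr k b a
    exact hiter n b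
  rw [μp_preimage_toZModPow_singleton,
    ← natCast_pow_mul_measure_preimage_toZModPow_inter hconst a, mul_comm _ (μp p _),
    ENNReal.mul_inv_cancel_right (pow_ne_zero k (Nat.cast_ne_zero.2 hp.out.ne_zero))
      (ENNReal.pow_ne_top (ENNReal.natCast_ne_top p))]

lemma Compatible.ergodic (hf : Compatible f) (htr : ∀ k, IsTransitive (reduceMod f k)) :
    Ergodic f (μp p) :=
  have hmp := hf.measurePreserving fun k => (htr k).bijective
  ⟨hmp, hf.preErgodic hmp htr⟩

end Ergodicity

section Transitivity

lemma iterate_eq_add_mul_add_mul_sum {R : Type*} [CommRing R] {f G : R → R} {c q : R}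
    (hf : ∀ x, f x = c + x + q * G x) (n : ℕ) (x : R) :
    f^[n] x = x + n * c + q * ∑ i ∈ range n, G (f^[i] x) := by
  induction n with
  | zero => simp
  | succ n ih =>
    rw [iterate_succ_apply', hf, sum_range_succ, ih]
    push_cast
    ring

lemma dvd_iterate_sub_sub_mul {R : Type*} [CommRing R] {g : R → R} {a d : R}
    (h : ∀ z, a ∣ g z - z - d) (m : ℕ) (z : R) : a ∣ g^[m] z - z - m * d := by
  induction m with
  | zero => simp
  | succ m ih =>
    convert dvd_add (h (g^[m] z)) ih using 1
    rw [iterate_succ_apply']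
    push_cast
    ring

lemma Compatible.pow_dvd_sum_sub_sum {G : ℤ_[p] → ℤ_[p]} (hG : Compatible G) {k : ℕ}
    {u v : Fin (p ^ k) → ℤ_[p]} (hu : Bijective (toZModPow k ∘ u))
    (hv : Bijective (toZModPow k ∘ v)) :
    (p : ℤ_[p]) ^ k ∣ ∑ i, G (u i) - ∑ i, G (v i) := by
  set σ := (Equiv.ofBijective _ hu).trans (Equiv.ofBijective _ hv).symm
  have hσ : ∀ i, toZModPow k (v (σ i)) = toZModPow k (u i) := fun i =>
    (Equiv.ofBijective _ hv).apply_symm_apply _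
  rw [← σ.sum_comp (fun j => G (v j)), ← sum_sub_distrib]
  exact dvd_sum fun i _ => hG.pow_dvd_sub (toZModPow_eq_toZModPow_iff.1 (hσ i).symm)

lemma bijective_toZModPow_comp_natCast (k : ℕ) :
    Bijective (toZModPow k ∘ fun i : Fin (p ^ k) => ((i : ℕ) : ℤ_[p])) := by
  rw [Fintype.bijective_iff_injective_and_card]
  refine ⟨fun i j hij => Fin.ext ?_, by simp⟩
  simpa [ZMod.val_natCast_of_lt i.2, ZMod.val_natCast_of_lt j.2] using congrArg ZMod.val hij

lemma pow_dvd_sum_range_natCast (hp2 : p ≠ 2) (k : ℕ) :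
    (p : ℤ_[p]) ^ k ∣ ∑ a ∈ range (p ^ k), (a : ℤ_[p]) := by
  have hcop : (p ^ k).Coprime 2 :=
    Nat.Coprime.pow_left k ((Nat.coprime_primes hp.out Nat.prime_two).2 hp2)
  have hnat : p ^ k ∣ ∑ a ∈ range (p ^ k), a :=
    hcop.dvd_of_dvd_mul_right (sum_range_id_mul_two (p ^ k) ▸ dvd_mul_right _ _)
  simpa using Nat.cast_dvd_cast (α := ℤ_[p]) hnat

lemma exists_lt_dvd_mul_sub {c : ℤ_[p]} (hc : ¬ (p : ℤ_[p]) ∣ c) (t : ℤ_[p]) :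
    ∃ m < p, (p : ℤ_[p]) ∣ m * c - t := by
  simp only [← Ideal.mem_span_singleton, ← maximalIdeal_eq_span_p, ← ker_toZMod,
    RingHom.mem_ker] at hc ⊢
  refine ⟨(toZMod t / toZMod c).val, ZMod.val_lt _, ?_⟩
  rw [map_sub, map_mul, map_natCast, ZMod.natCast_zmod_val, div_mul_cancel₀ _ hc, sub_self]

variable {c : ℤ_[p]} {G f : ℤ_[p] → ℤ_[p]}

lemma bijective_toZModPow_comp_iterate {k : ℕ}
    (hk : ∀ x y : ℤ_[p], ∃ n < p ^ k, (p : ℤ_[p]) ^ k ∣ f^[n] x - y) (x : ℤ_[p]) :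
    Bijective (toZModPow k ∘ fun i : Fin (p ^ k) => f^[i] x) := by
  rw [Fintype.bijective_iff_surjective_and_card]
  refine ⟨fun a => ?_, by simp⟩
  obtain ⟨n, hn, hdvd⟩ := hk x a.val
  refine ⟨⟨n, hn⟩, ?_⟩
  simpa using toZModPow_eq_toZModPow_iff.2 hdvd

lemma pow_succ_dvd_iterate_pow_sub (hG : Compatible G) {k : ℕ}
    (hGsum : (p : ℤ_[p]) ^ k ∣ ∑ a ∈ range (p ^ k), G a) (hf : ∀ x, f x = c + x + p * G x)
    (hk : ∀ x y : ℤ_[p], ∃ n < p ^ k, (p : ℤ_[p]) ^ k ∣ f^[n] x - y) (z : ℤ_[p]) :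
    (p : ℤ_[p]) ^ (k + 1) ∣ f^[p ^ k] z - z - p ^ k * c := by
  have horbit := hG.pow_dvd_sum_sub_sum (bijective_toZModPow_comp_iterate hk z)
    (bijective_toZModPow_comp_natCast k)
  simp only [Fin.sum_univ_eq_sum_range (fun i => G (f^[i] z)),
    Fin.sum_univ_eq_sum_range (fun i => G i)] at horbit
  convert mul_dvd_mul_left (p : ℤ_[p]) (dvd_add horbit hGsum) using 1
  · ring
  · rw [iterate_eq_add_mul_add_mul_sum hf]
    push_cast
    ring

lemma exists_iterate_lt_pow_succ_dvd_sub (hG : Compatible G) {k : ℕ}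
    (hGsum : (p : ℤ_[p]) ^ k ∣ ∑ a ∈ range (p ^ k), G a) (hc : ¬ (p : ℤ_[p]) ∣ c)
    (hf : ∀ x, f x = c + x + p * G x)
    (hk : ∀ x y : ℤ_[p], ∃ n < p ^ k, (p : ℤ_[p]) ^ k ∣ f^[n] x - y) (x y : ℤ_[p]) :
    ∃ n < p ^ (k + 1), (p : ℤ_[p]) ^ (k + 1) ∣ f^[n] x - y := by
  obtain ⟨j, hj, t, ht⟩ := hk x y
  obtain ⟨m, hm, hmt⟩ := exists_lt_dvd_mul_sub hc (-t)
  -- after the `j` steps, `m` rounds of `p^k` steps shift by `m p^k c ≡ -p^k t (mod p^(k+1))`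
  refine ⟨p ^ k * m + j, ?_, ?_⟩
  · calc p ^ k * m + j < p ^ k * (m + 1) := by linarith
      _ ≤ p ^ k * p := Nat.mul_le_mul_left _ hm
      _ = p ^ (k + 1) := (pow_succ p k).symm
  · have hcycle :=
      dvd_iterate_sub_sub_mul (pow_succ_dvd_iterate_pow_sub hG hGsum hf hk) m (f^[j] x)
    rw [← iterate_mul] at hcycle
    convert dvd_add hcycle (pow_succ (p : ℤ_[p]) k ▸ mul_dvd_mul_left _ hmt) using 1
    rw [iterate_add_apply]
    linear_combination ht

lemma exists_iterate_lt_pow_dvd_sub (hG : Compatible G)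
    (hGsum : ∀ k, (p : ℤ_[p]) ^ k ∣ ∑ a ∈ range (p ^ k), G a)
    (hc : ¬ (p : ℤ_[p]) ∣ c)
    (hf : ∀ x, f x = c + x + p * G x) (k : ℕ) (x y : ℤ_[p]) :
    ∃ n < p ^ k, (p : ℤ_[p]) ^ k ∣ f^[n] x - y := by
  induction k generalizing x y with
  | zero => exact ⟨0, by simp, by simp⟩
  | succ k ih => exact exists_iterate_lt_pow_succ_dvd_sub hG (hGsum k) hc hf ih x y

lemma Compatible.ergodic_const_add_add_mul (hG : Compatible G)
    (hGsum : ∀ k, (p : ℤ_[p]) ^ k ∣ ∑ a ∈ range (p ^ k), G a)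
    (hc : ¬ (p : ℤ_[p]) ∣ c) :
    Ergodic (fun x => c + x + p * G x) (μp p) := by
  have hf : Compatible fun x => c + x + p * G x :=
    ((compatible_const c).add compatible_id).add (hG.const_mul p)
  refine hf.ergodic fun k => hf.isTransitive_reduceMod fun x y => ?_
  obtain ⟨n, -, hn⟩ := exists_iterate_lt_pow_dvd_sub hG hGsum hc (fun _ => rfl) k x y
  exact ⟨n, hn⟩

end Transitivity

/-- For odd `p`, `c, r ∈ ℤ_[p]` with `c ≢ 0 (mod p)` and `r ≡ 1 (mod p)`, and compatible
`h`, the function `f(x) = c + r·x + p·(h(x+1) − h(x))` is ergodic w.r.t. `μp p`. -/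
theorem ergodic_of_affine_add_discrete_derivative
    (hp2 : p ≠ 2) (c r : ℤ_[p]) (h : ℤ_[p] → ℤ_[p]) (hh : Compatible h)
    (hc : ¬ (p : ℤ_[p]) ∣ c) (hr : (p : ℤ_[p]) ∣ (r - 1)) :
    Ergodic (fun x => c + r * x + (p : ℤ_[p]) * (h (x + 1) - h x)) (μp p) := by
  obtain ⟨s, hs⟩ := hr
  set G : ℤ_[p] → ℤ_[p] := fun x => s * x + (h (x + 1) - h x)
  have hG : Compatible G := (compatible_id.const_mul s).add ((hh.comp_add_const 1).sub hh)
  have hGsum : ∀ k, (p : ℤ_[p]) ^ k ∣ ∑ a ∈ range (p ^ k), G a := fun k => by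
    simp only [G, sum_add_distrib, ← mul_sum]
    exact dvd_add (dvd_mul_of_dvd_right (pow_dvd_sum_range_natCast hp2 k) s)
      (hh.pow_dvd_sum_range_sub k)
  convert hG.ergodic_const_add_add_mul hGsum hc using 2 with x
  rw [eq_add_of_sub_eq' hs]
  ring
end
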